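/- arXiv:2004.00059 — 2 statements merged into one kernel-verified Lean document; each statement's English description precedes it below -/
import Mathlib

section
/- Suppose A ∈ ℝ^{n×n}, V ∈ ℝ^{n×sp} has F-orthonormal block columns spanning a subspace K of ℝ^{n×p}, and the Arnoldi-type relation A V = V (T ⊗ I_p) + W (τ E^T ⊗ I_p) holds where T = V^T ◇ (AV) ∈ ℝ^{s×s}, and W has block columns F-orthogonal to all V_i. If the polynomial relation P(A^j q) = V(T^j (V^T ◇ q) ⊗ I_p) holds for some block q ∈ ℝ^{n×p} with A^j q ∈ K, then it also holds for j+1, where P is the F-orthogonal projector onto K. -/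
open Matrix BigOperators

/-- Frobenius inner product `⟨X,Y⟩_F = trace(Yᵀ X)`. -/
noncomputable def finner {n p : ℕ} (X Y : Matrix (Fin n) (Fin p) ℝ) : ℝ :=
  Matrix.trace (Yᵀ * X)

/-- The F-orthogonal projection `P(X) = V((Vᵀ ◇ X) ⊗ I_p) = ∑ i, ⟨X, V i⟩_F • V i`. -/
noncomputable def Pproj {n p s : ℕ} (V : Fin s → Matrix (Fin n) (Fin p) ℝ)
    (X : Matrix (Fin n) (Fin p) ℝ) : Matrix (Fin n) (Fin p) ℝ :=
  ∑ i, finner X (V i) • V i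

/-! Since `A^j q ∈ K`, it equals its projection `V (T^j (Vᵀ ◇ q))`. By the Arnoldi relation
`A V_j` is `∑ i, T_ij V_i` plus a multiple of `W`, which `P` annihilates; hence `P(A V d) = V (T d)`
for every coefficient vector `d`, and `d = T^j (Vᵀ ◇ q)` gives the claim. -/

theorem sum_smul_sum_smul_eq_sum_mulVec_smul {R M ι κ : Type*} [CommSemiring R]
    [AddCommMonoid M] [Module R M] [Fintype ι] [Fintype κ]
    (T : Matrix κ ι R) (d : ι → R) (v : κ → M) :
    ∑ j, d j • ∑ i, T i j • v i = ∑ i, (T *ᵥ d) i • v i := by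
  simp_rw [Finset.smul_sum, smul_smul, mulVec, dotProduct, Finset.sum_smul]
  rw [Finset.sum_comm]
  simp_rw [mul_comm]

noncomputable def Pprojₗ {n p s : ℕ} (V : Fin s → Matrix (Fin n) (Fin p) ℝ) :
    Matrix (Fin n) (Fin p) ℝ →ₗ[ℝ] Matrix (Fin n) (Fin p) ℝ where
  toFun := Pproj V
  map_add' X Y := by
    simp [Pproj, finner, Matrix.mul_add, add_smul, Finset.sum_add_distrib]
  map_smul' r X := by
    simp [Pproj, finner, Finset.smul_sum, mul_smul]

@[simp]
theorem Pprojₗ_apply {n p s : ℕ} (V : Fin s → Matrix (Fin n) (Fin p) ℝ)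
    (X : Matrix (Fin n) (Fin p) ℝ) : Pprojₗ V X = Pproj V X :=
  rfl

theorem Pproj_eq_self_of_mem_span {n p s : ℕ} {V : Fin s → Matrix (Fin n) (Fin p) ℝ}
    (horth : ∀ i j, finner (V i) (V j) = if i = j then 1 else 0)
    {X : Matrix (Fin n) (Fin p) ℝ} (hX : X ∈ Submodule.span ℝ (Set.range V)) :
    Pproj V X = X := by
  refine LinearMap.eqOn_span (f := Pprojₗ V) (g := LinearMap.id) ?_ hX
  rintro _ ⟨k, rfl⟩
  simp [Pproj, horth]

theorem Pproj_eq_zero_of_forall_finner_eq_zero {n p s : ℕ}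
    {V : Fin s → Matrix (Fin n) (Fin p) ℝ} {W : Matrix (Fin n) (Fin p) ℝ}
    (hW : ∀ i, finner W (V i) = 0) : Pproj V W = 0 := by
  simp [Pproj, hW]

theorem Pproj_sum_smul_add_smul {n p s : ℕ} {V : Fin s → Matrix (Fin n) (Fin p) ℝ}
    (horth : ∀ i j, finner (V i) (V j) = if i = j then 1 else 0)
    {W : Matrix (Fin n) (Fin p) ℝ} (hW : ∀ i, finner W (V i) = 0) (a : Fin s → ℝ) (b : ℝ) :
    Pproj V (∑ i, a i • V i + b • W) = ∑ i, a i • V i := by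
  have hmem : ∑ i, a i • V i ∈ Submodule.span ℝ (Set.range V) :=
    Submodule.sum_mem _ fun i _ => Submodule.smul_mem _ _ (Submodule.subset_span ⟨i, rfl⟩)
  rw [← Pprojₗ_apply, map_add, map_smul, Pprojₗ_apply, Pprojₗ_apply,
    Pproj_eq_self_of_mem_span horth hmem, Pproj_eq_zero_of_forall_finner_eq_zero hW,
    smul_zero, add_zero]

theorem Pproj_mul_sum_smul_of_arnoldi {n p s : ℕ} (A : Matrix (Fin n) (Fin n) ℝ)
    {V : Fin s → Matrix (Fin n) (Fin p) ℝ}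
    (horth : ∀ i j, finner (V i) (V j) = if i = j then 1 else 0)
    (T : Matrix (Fin s) (Fin s) ℝ) {W : Matrix (Fin n) (Fin p) ℝ}
    (hW : ∀ i, finner W (V i) = 0) (c : Fin s → ℝ)
    (hArnoldi : ∀ j, A * V j = (∑ i, T i j • V i) + c j • W) (d : Fin s → ℝ) :
    Pproj V (A * ∑ j, d j • V j) = ∑ i, (T *ᵥ d) i • V i := by
  rw [← sum_smul_sum_smul_eq_sum_mulVec_smul, ← Pprojₗ_apply]
  simp only [Matrix.mul_sum, Matrix.mul_smul, map_sum, map_smul, Pprojₗ_apply, hArnoldi,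
    Pproj_sum_smul_add_smul horth hW]

theorem exactness_inductive_step_general {n p s : ℕ}
    (A : Matrix (Fin n) (Fin n) ℝ)
    (V : Fin s → Matrix (Fin n) (Fin p) ℝ)
    (horth : ∀ i j, finner (V i) (V j) = if i = j then 1 else 0)
    (T : Matrix (Fin s) (Fin s) ℝ)
    (W : Matrix (Fin n) (Fin p) ℝ)
    (hWorth : ∀ i, finner W (V i) = 0)
    (c : Fin s → ℝ)
    (hArnoldi : ∀ j, A * V j = (∑ i, T i j • V i) + c j • W)
    (q : Matrix (Fin n) (Fin p) ℝ) (j : ℕ)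
    (hmem : (A ^ j * q) ∈ Submodule.span ℝ (Set.range V))
    (hind : Pproj V (A ^ j * q) = ∑ i, ((T ^ j).mulVec (fun i => finner q (V i))) i • V i) :
    Pproj V (A ^ (j + 1) * q) =
      ∑ i, ((T ^ (j + 1)).mulVec (fun i => finner q (V i))) i • V i := by
  have hq : A ^ j * q = ∑ i, ((T ^ j) *ᵥ fun i => finner q (V i)) i • V i :=
    (Pproj_eq_self_of_mem_span horth hmem).symm.trans hind
  rw [pow_succ', Matrix.mul_assoc, hq, Pproj_mul_sum_smul_of_arnoldi A horth T hWorth c hArnoldi,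
    pow_succ', ← mulVec_mulVec]

/-- inductive step of the exactness lemma.  Under the Arnoldi-type relation
`A V_j = ∑ i, T i j • V i + c j • W` with `T = Vᵀ ◇ (A V)` and `W` F-orthogonal to all
`V i`, if `A^j q` lies in the span of the block columns and
`P(A^j q) = V(T^j (Vᵀ ◇ q) ⊗ I_p)`, then the same identity holds for `j+1`. -/
theorem exactness_inductive_step {n p s : ℕ}
    (A : Matrix (Fin n) (Fin n) ℝ)
    (V : Fin s → Matrix (Fin n) (Fin p) ℝ)
    (horth : ∀ i j, finner (V i) (V j) = if i = j then 1 else 0)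
    (T : Matrix (Fin s) (Fin s) ℝ)
    (hT : ∀ i j, T i j = finner (A * V j) (V i))
    (W : Matrix (Fin n) (Fin p) ℝ)
    (hWorth : ∀ i, finner W (V i) = 0)
    (c : Fin s → ℝ)
    (hArnoldi : ∀ j, A * V j = (∑ i, T i j • V i) + c j • W)
    (q : Matrix (Fin n) (Fin p) ℝ) (j : ℕ)
    (hmem : (A ^ j * q) ∈ Submodule.span ℝ (Set.range V))
    (hind : Pproj V (A ^ j * q) = ∑ i, ((T ^ j).mulVec (fun i => finner q (V i))) i • V i) :
    Pproj V (A ^ (j + 1) * q) =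
      ∑ i, ((T ^ (j + 1)).mulVec (fun i => finner q (V i))) i • V i :=
  exactness_inductive_step_general A V horth T W hWorth c hArnoldi q j hmem hind
end

section
/- Let q_m(z) = (z−s_1)⋯(z−s_m) with the s_i not eigenvalues of A ∈ ℝ^{n×n} nor of T ∈ ℝ^{2m×2m}, let V ∈ ℝ^{n×2mp} have F-orthonormal block columns with V_1 = V̂/‖V̂‖_F, and suppose P(A^j q_m(A)^{-1} V̂) = V(T^j (V^T ◇ (q_m(A)^{-1}V̂)) ⊗ I_p) for all 0 ≤ j ≤ 2m, where P is the F-orthogonal projector onto the span of the block columns, and q_m(A)^{-1}V̂ lies in that span. Then V^T ◇ (q_m(A)^{-1}V̂) = ‖V̂‖_F · q_m(T)^{-1} e_1. -/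
open Matrix BigOperators

/-- Frobenius norm. -/
noncomputable def fnorm {n p : ℕ} (X : Matrix (Fin n) (Fin p) ℝ) : ℝ :=
  Real.sqrt (finner X X)

/-!
The polynomial `q_m(z) = ∏ (z - sᵢ)` has degree `m ≤ 2m`, so the exactness identities for
`0 ≤ j ≤ 2m` combine linearly into `Vᵀ ◇ (q_m(A) q) = q_m(T) (Vᵀ ◇ q)`. Since `q_m(A) q = V̂` and
`V̂ = ‖V̂‖_F V₁`, the left side is `‖V̂‖_F e₁`; invert `q_m(T)`.
-/

/-- The coordinates `Vᵀ ◇ X` of `X` against the block columns `V i`. -/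
noncomputable def diamond {n p s : ℕ} (V : Fin s → Matrix (Fin n) (Fin p) ℝ) :
    Matrix (Fin n) (Fin p) ℝ →ₗ[ℝ] Fin s → ℝ where
  toFun X i := finner X (V i)
  map_add' X Y := funext fun i => by simp [finner, Matrix.mul_add]
  map_smul' a X := funext fun i => by simp [finner]

@[simp]
lemma diamond_apply {n p s : ℕ} (V : Fin s → Matrix (Fin n) (Fin p) ℝ)
    (X : Matrix (Fin n) (Fin p) ℝ) (i : Fin s) : diamond V X i = finner X (V i) :=
  rfl

section Orthonormal

variable {n p s : ℕ} {V : Fin s → Matrix (Fin n) (Fin p) ℝ}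
  (horth : ∀ i j, finner (V i) (V j) = if i = j then 1 else 0)
include horth

lemma diamond_self_of_orthonormal (k : Fin s) : diamond V (V k) = Pi.single k 1 := by
  funext i
  simp [horth, Pi.single_apply, eq_comm]

lemma diamond_sum_smul_of_orthonormal (c : Fin s → ℝ) : diamond V (∑ i, c i • V i) = c := by
  simp only [map_sum, map_smul, diamond_self_of_orthonormal horth]
  ext i
  simp [Pi.single_apply]

lemma diamond_Pproj_of_orthonormal (X : Matrix (Fin n) (Fin p) ℝ) :
    diamond V (Pproj V X) = diamond V X :=
  diamond_sum_smul_of_orthonormal horth (diamond V X)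

lemma ne_zero_of_orthonormal (k : Fin s) : V k ≠ 0 := by
  intro h
  simpa [h, finner] using horth k k

end Orthonormal

lemma map_aeval_mul_of_map_pow_mul {R ι κ μ : Type*} [CommRing R] [Fintype ι] [DecidableEq ι]
    [Fintype μ] [DecidableEq μ] (L : Matrix ι κ R →ₗ[R] μ → R) (A : Matrix ι ι R)
    (T : Matrix μ μ R) (q : Matrix ι κ R) {d : ℕ}
    (hpow : ∀ j ≤ d, L (A ^ j * q) = T ^ j *ᵥ L q) {P : Polynomial R} (hP : P.natDegree ≤ d) :
    L (Polynomial.aeval A P * q) = Polynomial.aeval T P *ᵥ L q := by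
  calc L (Polynomial.aeval A P * q)
      = ∑ k ∈ Finset.range (P.natDegree + 1), P.coeff k • L (A ^ k * q) := by
        simp only [Polynomial.aeval_eq_sum_range, Matrix.sum_mul, map_sum, Matrix.smul_mul,
          map_smul]
    _ = ∑ k ∈ Finset.range (P.natDegree + 1), P.coeff k • (T ^ k *ᵥ L q) :=
        Finset.sum_congr rfl fun k hk => by
          rw [hpow k (by rw [Finset.mem_range] at hk; omega)]
    _ = Polynomial.aeval T P *ᵥ L q := by
        simp only [Polynomial.aeval_eq_sum_range, Matrix.sum_mulVec, Matrix.smul_mulVec]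

lemma aeval_nodal_eq_prod {R B : Type*} [CommRing R] [Ring B] [Algebra R B] {m : ℕ}
    (v : Fin m → R) (b : B) :
    Polynomial.aeval b (Lagrange.nodal Finset.univ v) = (List.ofFn fun i => b - v i • 1).prod := by
  rw [Lagrange.nodal, ← List.prod_ofFn, map_list_prod, List.map_ofFn]
  congr 2
  funext i
  simp [Algebra.algebraMap_eq_smul_one]

/-- with `q_m(z) = (z−s₁)⋯(z−s_m)`, if the exactness identity
`P(A^j q_m(A)⁻¹ V̂) = V(T^j (Vᵀ ◇ (q_m(A)⁻¹ V̂)) ⊗ I_p)` holds for all `0 ≤ j ≤ 2m`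
and `q_m(A)⁻¹ V̂` lies in the span of the block columns, then
`Vᵀ ◇ (q_m(A)⁻¹ V̂) = ‖V̂‖_F · q_m(T)⁻¹ e₁`. -/
theorem diamond_coords_of_exactness {n p m : ℕ} (hm : 0 < m)
    (A : Matrix (Fin n) (Fin n) ℝ) (ss : Fin m → ℝ)
    (T : Matrix (Fin (2 * m)) (Fin (2 * m)) ℝ)
    (hAinv : IsUnit ((List.ofFn fun i : Fin m => A - ss i • 1).prod))
    (hTinv : IsUnit ((List.ofFn fun i : Fin m => T - ss i • 1).prod))
    (V : Fin (2 * m) → Matrix (Fin n) (Fin p) ℝ)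
    (horth : ∀ i j, finner (V i) (V j) = if i = j then 1 else 0)
    (Vhat : Matrix (Fin n) (Fin p) ℝ)
    (hV1 : V ⟨0, by omega⟩ = (fnorm Vhat)⁻¹ • Vhat)
    (q : Matrix (Fin n) (Fin p) ℝ)
    (hq : q = ((List.ofFn fun i : Fin m => A - ss i • 1).prod)⁻¹ * Vhat)
    (hexact : ∀ j ≤ 2 * m,
      Pproj V (A ^ j * q) = ∑ i, ((T ^ j).mulVec (fun i => finner q (V i))) i • V i) :
    (fun i => finner q (V i)) =
      fnorm Vhat •
        (((List.ofFn fun i : Fin m => T - ss i • 1).prod)⁻¹).mulVec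
          (Pi.single ⟨0, by omega⟩ 1) := by
  set e₁ : Fin (2 * m) := ⟨0, by omega⟩
  have hpow : ∀ j ≤ 2 * m, diamond V (A ^ j * q) = T ^ j *ᵥ diamond V q := fun j hj => by
    rw [← diamond_Pproj_of_orthonormal horth, hexact j hj, diamond_sum_smul_of_orthonormal horth]
    rfl
  have hAq : Polynomial.aeval A (Lagrange.nodal Finset.univ ss) * q = Vhat := by
    rw [aeval_nodal_eq_prod, hq, Matrix.mul_nonsing_inv_cancel_left _ _
      ((Matrix.isUnit_iff_isUnit_det _).mp hAinv)]
  have hnorm : fnorm Vhat ≠ 0 := fun h => ne_zero_of_orthonormal horth e₁ (by simp [e₁, hV1, h])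
  have hdiamond_Vhat : diamond V Vhat = fnorm Vhat • Pi.single e₁ 1 := calc
    diamond V Vhat = diamond V (fnorm Vhat • V e₁) := by rw [hV1, smul_inv_smul₀ hnorm]
    _ = fnorm Vhat • Pi.single e₁ 1 := by rw [map_smul, diamond_self_of_orthonormal horth]
  have hTq : (List.ofFn fun i : Fin m => T - ss i • 1).prod *ᵥ diamond V q
      = fnorm Vhat • Pi.single e₁ 1 := by
    rw [← aeval_nodal_eq_prod, ← map_aeval_mul_of_map_pow_mul _ A T q hpow
      (by rw [Lagrange.natDegree_nodal, Finset.card_univ, Fintype.card_fin]; omega),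
      hAq, hdiamond_Vhat]
  let := hTinv.invertible
  rw [← Matrix.mulVec_smul, ← hTq, Matrix.inv_mulVec_eq_vec rfl]
  rfl
end
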